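/- arXiv:0704.2777 — 6 statements merged into one kernel-verified Lean document; each statement's English description precedes it below -/
import Mathlib

section
/- The four subspaces V₁ ∩ W₁, V₁ ∩ W₂, V₂ ∩ W₁, V₂ ∩ W₂ form an independent family (their pairwise and mutual intersections are trivial in the sense of an internal direct sum), and F(1) = (V₁ ∩ W₁) ⊕ (V₁ ∩ W₂) ⊕ (V₂ ∩ W₁) ⊕ (V₂ ∩ W₂). -/
open Submodule

/-- The increasing sequence of subspaces `F(n)`:
`F(0) = ⊥`, `F(n+1) = Σ_{i,j} (F(n) + Vᵢ) ⊓ (F(n) + Wⱼ)`. -/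
noncomputable def Fseq {K E : Type*} [Field K] [AddCommGroup E] [Module K E]
    (V W : Fin 2 → Submodule K E) : ℕ → Submodule K E
  | 0 => ⊥
  | n + 1 => ⨆ i : Fin 2, ⨆ j : Fin 2, (Fseq V W n ⊔ V i) ⊓ (Fseq V W n ⊔ W j)

theorem disjoint_inf_inf_sup_of_disjoint {α : Type*} [Lattice α] [OrderBot α]
    [IsModularLattice α] {a a' b b' : α} (ha : Disjoint a a') (hb : Disjoint b b') :
    Disjoint (a ⊓ b) (a ⊓ b' ⊔ a') := by
  have hcut : (a ⊓ b' ⊔ a') ⊓ a = a ⊓ b' := by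
    rw [sup_inf_assoc_of_le _ inf_le_left, inf_comm a', ha.eq_bot, sup_bot_eq]
  rw [disjoint_iff]
  calc a ⊓ b ⊓ (a ⊓ b' ⊔ a') = (a ⊓ b' ⊔ a') ⊓ a ⊓ b := by ac_rfl
    _ = a ⊓ b' ⊓ b := by rw [hcut]
    _ = ⊥ := (hb.symm.mono_left inf_le_right).eq_bot

theorem iSupIndep.inf_prod {α ι κ : Type*} [CompleteLattice α] [IsModularLattice α]
    {V : ι → α} {W : κ → α} (hV : iSupIndep V) (hW : iSupIndep W) :
    iSupIndep fun p : ι × κ => V p.1 ⊓ W p.2 := by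
  rintro ⟨i, j⟩
  -- the other pieces all lie in `V i ⊓ (⨆ j' ≠ j, W j') ⊔ ⨆ i' ≠ i, V i'`
  refine (disjoint_inf_inf_sup_of_disjoint (hV i) (hW j)).mono_right <|
    iSup₂_le fun ⟨i', j'⟩ hne => ?_
  by_cases hi : i' = i
  · subst hi
    have hj : j' ≠ j := fun hj => hne (by rw [hj])
    exact le_sup_of_le_left <|
      inf_le_inf_left _ (le_iSup₂_of_le (f := fun k _ => W k) j' hj le_rfl)
  · exact le_sup_of_le_right <|
      inf_le_left.trans (le_iSup₂_of_le (f := fun k _ => V k) i' hi le_rfl)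

theorem iSupIndep_fin_two {α : Type*} [CompleteLattice α] {t : Fin 2 → α} :
    iSupIndep t ↔ Disjoint (t 0) (t 1) :=
  iSupIndep_pair Fin.zero_ne_one fun k => by fin_cases k <;> simp

theorem Fseq_one {K E : Type*} [Field K] [AddCommGroup E] [Module K E]
    (V W : Fin 2 → Submodule K E) :
    Fseq V W 1 = ⨆ p : Fin 2 × Fin 2, V p.1 ⊓ W p.2 := by
  simp [Fseq, iSup_prod]

theorem stmt0_general {K E : Type*} [Field K] [AddCommGroup E] [Module K E]
    (V W : Fin 2 → Submodule K E)
    (hV : IsCompl (V 0) (V 1)) (hW : IsCompl (W 0) (W 1)) :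
    iSupIndep (fun p : Fin 2 × Fin 2 => V p.1 ⊓ W p.2) ∧
      Fseq V W 1 = ⨆ p : Fin 2 × Fin 2, V p.1 ⊓ W p.2 :=
  ⟨(iSupIndep_fin_two.2 hV.disjoint).inf_prod (iSupIndep_fin_two.2 hW.disjoint), Fseq_one V W⟩

/-- The four subspaces `Vᵢ ⊓ Wⱼ` form an independent family and
`F(1)` is their (internal direct) sum. -/
theorem stmt0 {K E : Type*} [Field K] [AddCommGroup E] [Module K E]
    [FiniteDimensional K E] (hchar : (2 : K) ≠ 0)
    (V W : Fin 2 → Submodule K E)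
    (hV : IsCompl (V 0) (V 1)) (hW : IsCompl (W 0) (W 1)) :
    iSupIndep (fun p : Fin 2 × Fin 2 => V p.1 ⊓ W p.2) ∧
      Fseq V W 1 = ⨆ p : Fin 2 × Fin 2, V p.1 ⊓ W p.2 :=
  stmt0_general V W hV hW
end

section
/- For every non-negative integer n, the kernel of θⁿ equals F(n). -/
open Submodule

/-- The projection onto `A` along a complement `B`, as an endomorphism of `E`. -/
noncomputable def projAlong {K E : Type*} [Field K] [AddCommGroup E] [Module K E]
    (A B : Submodule K E) (h : IsCompl A B) : E →ₗ[K] E :=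
  A.subtype ∘ₗ A.linearProjOfIsCompl B h

/-- `θ = p_{W₁}^{W₂} ∘ p_{V₁}^{V₂} − p_{V₁}^{V₂} ∘ p_{W₁}^{W₂}`. -/
noncomputable def theta {K E : Type*} [Field K] [AddCommGroup E] [Module K E]
    (V W : Fin 2 → Submodule K E)
    (hV : IsCompl (V 0) (V 1)) (hW : IsCompl (W 0) (W 1)) : Module.End K E :=
  projAlong (W 0) (W 1) hW ∘ₗ projAlong (V 0) (V 1) hV -
    projAlong (V 0) (V 1) hV ∘ₗ projAlong (W 0) (W 1) hW

/-!
Write `p`, `q` for the projections onto `V₀` along `V₁` and onto `W₀` along `W₁`, so that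
`θ = q p - p q`. Then `θ` exchanges `V₀` and `V₁`, exchanges `W₀` and `W₁`, and kills every
`Vᵢ ∩ Wⱼ`; by the recursion defining `F`, this gives `θ F(n+1) ⊆ F(n)`.

Conversely, each `F(n)` is invariant under `p`: by the modular law
`(F + Vᵢ) ∩ (F + Wⱼ) = F + Vᵢ ∩ (F + Wⱼ)`, and `p` is the identity or zero on `Vᵢ`.
If `θ x ∈ F(n)`, write `x = a + b` with `a = p x ∈ V₀` and `b = x - p x ∈ V₁`. The
`V₁`-component of `q a` is that of `θ x`, and the `V₀`-component of `q b` is minus that of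
`θ x`; both lie in `F(n)`. This puts `q a`, `a - q a`, `q b`, `b - q b` in `F(n+1)`, hence
`x ∈ F(n+1)`. So `F(n+1) = θ⁻¹ F(n)`, and `ker θⁿ = F(n)` follows by induction.
-/

lemma Submodule.mem_sup_of_projection_mem {R M : Type*} [Ring R] [AddCommGroup M] [Module R M]
    {A B : Submodule R M} (h : IsCompl A B) {S : Submodule R M} {y : M}
    (hy : B.projection A h.symm y ∈ S) : y ∈ S ⊔ A := by
  rw [← projection_add_projection_eq_self h y, add_comm]
  exact add_mem_sup hy (projection_apply_mem h y)

lemma Submodule.projection_apply_eq_self_or_eq_zero {R M : Type*} [Ring R] [AddCommGroup M]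
    [Module R M] {U : Fin 2 → Submodule R M} (h : IsCompl (U 0) (U 1)) {i : Fin 2} {x : M}
    (hx : x ∈ U i) : (U 0).projection (U 1) h x = x ∨ (U 0).projection (U 1) h x = 0 := by
  fin_cases i
  · exact .inl (projection_apply_of_mem_left h hx)
  · exact .inr (projection_apply_of_mem_right h hx)

section

variable {K E : Type*} [Field K] [AddCommGroup E] [Module K E]
  (V W : Fin 2 → Submodule K E) (hV : IsCompl (V 0) (V 1)) (hW : IsCompl (W 0) (W 1))

lemma theta_apply (x : E) :
    theta V W hV hW x =
      (W 0).projection (W 1) hW ((V 0).projection (V 1) hV x) -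
        (V 0).projection (V 1) hV ((W 0).projection (W 1) hW x) :=
  rfl

lemma theta_swap : theta W V hW hV = -theta V W hV hW := by
  simp only [theta, neg_sub]

variable {V W}

lemma Fseq_succ_le_iff {n : ℕ} {U : Submodule K E} :
    Fseq V W (n + 1) ≤ U ↔ ∀ i j, (Fseq V W n ⊔ V i) ⊓ (Fseq V W n ⊔ W j) ≤ U := by
  simp only [Fseq, iSup_le_iff]

lemma inf_le_Fseq_succ (n : ℕ) (i j : Fin 2) :
    (Fseq V W n ⊔ V i) ⊓ (Fseq V W n ⊔ W j) ≤ Fseq V W (n + 1) :=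
  Fseq_succ_le_iff.1 le_rfl i j

lemma Fseq_le_comap_projection (n : ℕ) :
    Fseq V W n ≤ comap ((V 0).projection (V 1) hV) (Fseq V W n) := by
  induction n with
  | zero => simp [Fseq]
  | succ n ih =>
    refine Fseq_succ_le_iff.2 fun i j => ?_
    rw [← map_le_iff_le_comap]
    have hVi : map ((V 0).projection (V 1) hV) (V i ⊓ (Fseq V W n ⊔ W j)) ≤
        V i ⊓ (Fseq V W n ⊔ W j) := by
      rintro _ ⟨y, hy, rfl⟩
      rcases projection_apply_eq_self_or_eq_zero hV hy.1 with hp | hp <;> rw [hp]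
      exacts [hy, zero_mem _]
    calc map ((V 0).projection (V 1) hV) ((Fseq V W n ⊔ V i) ⊓ (Fseq V W n ⊔ W j))
        ≤ map ((V 0).projection (V 1) hV) (Fseq V W n ⊔ V i ⊓ (Fseq V W n ⊔ W j)) :=
          map_mono (sup_inf_le_assoc_of_le _ le_sup_left)
      _ ≤ Fseq V W n ⊔ V i ⊓ (Fseq V W n ⊔ W j) := by
          rw [Submodule.map_sup]
          exact sup_le_sup (map_le_iff_le_comap.2 ih) hVi
      _ ≤ (Fseq V W n ⊔ V i) ⊓ (Fseq V W n ⊔ W j) :=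
          le_inf (sup_le_sup_left inf_le_left _) (sup_le le_sup_left inf_le_right)
      _ ≤ Fseq V W (n + 1) := inf_le_Fseq_succ n i j

lemma map_theta_le_rev_left (i : Fin 2) : map (theta V W hV hW) (V i) ≤ V i.rev := by
  rw [map_le_iff_le_comap]
  revert i
  refine Fin.forall_fin_two.2 ⟨fun v hv => ?_, fun v hv => ?_⟩
  · show theta V W hV hW v ∈ V 1
    rw [theta_apply, projection_apply_of_mem_left hV hv, ← projection_eq_self_sub_projection hV]
    exact projection_apply_mem _ _
  · show theta V W hV hW v ∈ V 0
    rw [theta_apply, projection_apply_of_mem_right hV hv, map_zero, zero_sub]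
    exact neg_mem (projection_apply_mem _ _)

lemma map_theta_le_rev_right (j : Fin 2) : map (theta V W hV hW) (W j) ≤ W j.rev := by
  have h := map_theta_le_rev_left hW hV j
  rwa [theta_swap, Submodule.map_neg] at h

lemma theta_apply_eq_zero_of_mem_inf {i j : Fin 2} {x : E} (hx : x ∈ V i ⊓ W j) :
    theta V W hV hW x = 0 := by
  rcases projection_apply_eq_self_or_eq_zero hV hx.1 with hp | hp <;>
    rcases projection_apply_eq_self_or_eq_zero hW hx.2 with hq | hq <;>
    simp [theta_apply, hp, hq]

lemma Fseq_succ_le_comap_theta (n : ℕ) :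
    Fseq V W (n + 1) ≤ comap (theta V W hV hW) (Fseq V W n) := by
  induction n with
  | zero =>
    refine Fseq_succ_le_iff.2 fun i j x hx => ?_
    simp only [Fseq, bot_sup_eq] at hx
    exact (mem_bot K).2 (theta_apply_eq_zero_of_mem_inf hV hW hx)
  | succ n ih =>
    refine Fseq_succ_le_iff.2 fun i j => ?_
    rw [← map_le_iff_le_comap]
    calc map (theta V W hV hW) ((Fseq V W (n + 1) ⊔ V i) ⊓ (Fseq V W (n + 1) ⊔ W j))
        ≤ map (theta V W hV hW) (Fseq V W (n + 1) ⊔ V i) ⊓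
            map (theta V W hV hW) (Fseq V W (n + 1) ⊔ W j) := map_inf_le _
      _ ≤ (Fseq V W n ⊔ V i.rev) ⊓ (Fseq V W n ⊔ W j.rev) := by
          rw [Submodule.map_sup, Submodule.map_sup]
          exact inf_le_inf
            (sup_le_sup (map_le_iff_le_comap.2 ih) (map_theta_le_rev_left hV hW i))
            (sup_le_sup (map_le_iff_le_comap.2 ih) (map_theta_le_rev_right hV hW j))
      _ ≤ Fseq V W (n + 1) := inf_le_Fseq_succ n i.rev j.rev

lemma mem_Fseq_succ_of_mem_of_projection_mem_sup {n : ℕ} {i : Fin 2} {a : E} (ha : a ∈ V i)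
    (hqa : (W 0).projection (W 1) hW a ∈ Fseq V W n ⊔ V i) : a ∈ Fseq V W (n + 1) := by
  rw [← projection_add_projection_eq_self hW a]
  refine add_mem (inf_le_Fseq_succ n i 0 ⟨hqa, mem_sup_right (projection_apply_mem hW a)⟩)
    (inf_le_Fseq_succ n i 1 ⟨?_, mem_sup_right (projection_apply_mem hW.symm a)⟩)
  rw [projection_eq_self_sub_projection hW]
  exact sub_mem (mem_sup_right ha) hqa

lemma comap_theta_le_Fseq_succ (n : ℕ) :
    comap (theta V W hV hW) (Fseq V W n) ≤ Fseq V W (n + 1) := by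
  intro x hx
  set p := (V 0).projection (V 1) hV
  set p' := (V 1).projection (V 0) hV.symm
  set q := (W 0).projection (W 1) hW
  have hθx : theta V W hV hW x ∈ Fseq V W n := hx
  have hpθx : p (theta V W hV hW x) ∈ Fseq V W n := Fseq_le_comap_projection hV n hθx
  have hp'θx : p' (theta V W hV hW x) ∈ Fseq V W n := by
    rw [projection_eq_self_sub_projection hV]
    exact sub_mem hθx hpθx
  have hqpx : p' (q (p x)) = p' (theta V W hV hW x) := by
    rw [theta_apply, map_sub, projection_apply_of_mem_right hV.symm (projection_apply_mem hV _),
      sub_zero]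
  have hqp'x : p (q (p' x)) = -p (theta V W hV hW x) := by
    rw [theta_apply, projection_eq_self_sub_projection hV, map_sub, map_sub, map_sub,
      projection_apply_of_mem_left hV (projection_apply_mem hV _)]
    abel
  rw [← projection_add_projection_eq_self hV x]
  refine add_mem (mem_Fseq_succ_of_mem_of_projection_mem_sup hW (projection_apply_mem hV x) ?_)
    (mem_Fseq_succ_of_mem_of_projection_mem_sup hW (projection_apply_mem hV.symm x) ?_)
  · exact mem_sup_of_projection_mem hV (hqpx ▸ hp'θx)
  · exact mem_sup_of_projection_mem hV.symm (hqp'x ▸ neg_mem hpθx)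

lemma comap_theta_Fseq (n : ℕ) :
    comap (theta V W hV hW) (Fseq V W n) = Fseq V W (n + 1) :=
  le_antisymm (comap_theta_le_Fseq_succ hV hW n) (Fseq_succ_le_comap_theta hV hW n)

end

theorem stmt1_general {K E : Type*} [Field K] [AddCommGroup E] [Module K E]
    (V W : Fin 2 → Submodule K E)
    (hV : IsCompl (V 0) (V 1)) (hW : IsCompl (W 0) (W 1)) :
    ∀ n : ℕ, LinearMap.ker ((theta V W hV hW) ^ n) = Fseq V W n := by
  intro n
  induction n with
  | zero => rw [pow_zero, Module.End.one_eq_id, LinearMap.ker_id]; rfl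
  | succ n ih =>
    rw [pow_succ, Module.End.mul_eq_comp, LinearMap.ker_comp, ih, comap_theta_Fseq]

/-- For every `n`, `ker θⁿ = F(n)`. -/
theorem stmt1 {K E : Type*} [Field K] [AddCommGroup E] [Module K E]
    [FiniteDimensional K E] (hchar : (2 : K) ≠ 0)
    (V W : Fin 2 → Submodule K E)
    (hV : IsCompl (V 0) (V 1)) (hW : IsCompl (W 0) (W 1)) :
    ∀ n : ℕ, LinearMap.ker ((theta V W hV hW) ^ n) = Fseq V W n :=
  stmt1_general V W hV hW
end

section
/- Suppose W₁ = V₁^⊥ and W₂ = V₂^⊥ for a nondegenerate reflexive bilinear form ⟨·,·⟩ on E, and let L = p_{V₁}^{V₂} − p_{W₂}^{W₁} and L' = p_{V₁}^{V₂} − p_{W₁}^{W₂}. Then: (i) L is anti-self-adjoint with respect to ⟨·,·⟩ (⟨Lx, y⟩ = −⟨x, Ly⟩ for all x, y ∈ E), the generalized eigenspaces E_{(L,1)} and E_{(L,-1)} are totally isotropic, and their direct sum E_{(L,1)} ⊕ E_{(L,-1)} is a nondegenerate subspace; (ii) L' is self-adjoint with respect to ⟨·,·⟩ (⟨L'x,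 y⟩ = ⟨x, L'y⟩ for all x, y ∈ E), and the generalized eigenspaces E_{(L',1)} and E_{(L',-1)} are nondegenerate subspaces orthogonal to each other. -/
open Submodule

/-- The generalized eigenspace `E_{(L,μ)} = ∪ₙ ker (L − μ·id)ⁿ`. -/
noncomputable def genEigen {K E : Type*} [Field K] [AddCommGroup E] [Module K E]
    (L : Module.End K E) (μ : K) : Submodule K E :=
  ⨆ n : ℕ, LinearMap.ker ((L - μ • (1 : Module.End K E)) ^ n)

/-!
Because `W₂ ⊥ V₂` and `W₁ ⊥ V₁`, the projections `p_{V₁}^{V₂}` and `p_{W₂}^{W₁}` are adjoint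
to each other; hence `L` is anti-self-adjoint and `L' = p_{V₁}^{V₂} + p_{W₂}^{W₁} - 1` is
self-adjoint. For an adjoint pair `(L, M)`, `E_{(L,λ)}` is orthogonal to `E_{(M,μ)}` when `λ ≠ μ`,
and to the Fitting complement `⋂ₙ range (M - λ)ⁿ` of `E_{(M,λ)}`. Applied to `M = -L`, whose
generalized eigenspaces are those of `L` with the eigenvalue negated, and to `M = L'`, this gives
the orthogonality relations; combined with the Fitting decomposition
`E = E_{(L,λ)} ⊕ ⋂ₙ range (L - λ)ⁿ` and the nondegeneracy of the form, it gives the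
nondegeneracy statements.
-/

open LinearMap (IsAdjointPair)

section Adjoint

variable {K E : Type*} [Field K] [AddCommGroup E] [Module K E]

lemma projAlong_mem {A C : Submodule K E} (h : IsCompl A C) (x : E) :
    projAlong A C h x ∈ A :=
  Subtype.prop _

lemma projAlong_add_projAlong_apply {A C : Submodule K E} (h : IsCompl A C) (x : E) :
    projAlong A C h x + projAlong C A h.symm x = x :=
  Submodule.projection_add_projection_eq_self h x

lemma projAlong_add_projAlong {A C : Submodule K E} (h : IsCompl A C) :
    projAlong A C h + projAlong C A h.symm = 1 :=
  LinearMap.ext (projAlong_add_projAlong_apply h)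

lemma isAdjointPair_projAlong (B : LinearMap.BilinForm K E) {A C X Y : Submodule K E}
    (hAC : IsCompl A C) (hXY : IsCompl X Y)
    (hX : X ≤ B.orthogonal C) (hY : Y ≤ B.orthogonal A) :
    IsAdjointPair B B (projAlong A C hAC) (projAlong X Y hXY) := by
  intro x y
  have hy : B (projAlong A C hAC x) (projAlong Y X hXY.symm y) = 0 :=
    hY (projAlong_mem hXY.symm y) _ (projAlong_mem hAC x)
  have hx : B (projAlong C A hAC.symm x) (projAlong X Y hXY y) = 0 :=
    hX (projAlong_mem hXY y) _ (projAlong_mem hAC.symm x)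
  conv_lhs => rw [← projAlong_add_projAlong_apply hXY y]
  conv_rhs => rw [← projAlong_add_projAlong_apply hAC x]
  simp only [map_add, LinearMap.add_apply, hx, hy]

lemma mem_genEigen {L : Module.End K E} {μ : K} {x : E} :
    x ∈ genEigen L μ ↔ ∃ n : ℕ, ((L - μ • 1) ^ n) x = 0 := by
  unfold genEigen
  rw [Submodule.mem_iSup_of_directed]
  · simp only [LinearMap.mem_ker]
  · exact (L - μ • 1).iterateKer.monotone.directed_le

lemma genEigen_eq_genEigenspace (L : Module.End K E) (μ : K) :
    genEigen L μ = L.genEigenspace μ ⊤ := by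
  ext x
  simp only [mem_genEigen, Module.End.mem_genEigenspace_top, LinearMap.mem_ker]

lemma genEigen_neg (L : Module.End K E) (μ : K) : genEigen (-L) (-μ) = genEigen L μ := by
  have h : -L - (-μ) • (1 : Module.End K E) = -(L - μ • 1) := by rw [neg_smul]; abel
  ext x
  simp only [mem_genEigen, h]
  refine exists_congr fun n => ?_
  rw [neg_pow]
  rcases neg_one_pow_eq_or (Module.End K E) n with h1 | h1 <;> simp [h1]

lemma isCompl_genEigen_iInf_range [FiniteDimensional K E] (L : Module.End K E) (μ : K) :
    IsCompl (genEigen L μ) (⨅ n : ℕ, LinearMap.range ((L - μ • 1) ^ n)) :=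
  LinearMap.isCompl_iSup_ker_pow_iInf_range_pow _

namespace LinearMap.IsAdjointPair

variable {B : LinearMap.BilinForm K E} {L M : Module.End K E}

lemma pow (h : IsAdjointPair B B L M) (n : ℕ) : IsAdjointPair B B ⇑(L ^ n) ⇑(M ^ n) := by
  induction n with
  | zero => exact LinearMap.isAdjointPair_one
  | succ n ih => rw [pow_succ, pow_succ']; exact ih.mul h

lemma sub_smul_one (h : IsAdjointPair B B L M) (μ : K) :
    IsAdjointPair B B ⇑(L - μ • 1) ⇑(M - μ • 1) :=
  h.sub (LinearMap.isAdjointPair_one.smul μ)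

/-- The identity `(λ - μ) B x y = B x ((M - μ) y) - B ((L - λ) x) y` drives a double induction
on the nilpotency orders of `x` and `y`. -/
lemma apply_eq_zero_of_pow_apply_eq_zero (h : IsAdjointPair B B L M) {lam μ : K}
    (hne : lam ≠ μ) (m n : ℕ) (x y : E) (hx : ((L - lam • 1) ^ m) x = 0)
    (hy : ((M - μ • 1) ^ n) y = 0) : B x y = 0 := by
  induction m generalizing x y n with
  | zero => simp_all
  | succ m ihm =>
    induction n generalizing y with
    | zero => simp_all
    | succ n ihn =>
      rw [pow_succ, Module.End.mul_apply] at hx hy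
      have hLx : B ((L - lam • 1) x) y = 0 := ihm _ _ _ hx (by rwa [pow_succ])
      have hMy : B x ((M - μ • 1) y) = 0 := ihn _ hy
      have key : (lam - μ) * B x y = B x ((M - μ • 1) y) - B ((L - lam • 1) x) y := by
        simp only [LinearMap.sub_apply, LinearMap.smul_apply, Module.End.one_apply, map_sub,
          map_smul, LinearMap.smul_apply, smul_eq_mul, h x y]
        ring
      rw [hLx, hMy, sub_zero] at key
      exact (mul_eq_zero.mp key).resolve_left (sub_ne_zero.mpr hne)

lemma apply_eq_zero_of_mem_genEigen (h : IsAdjointPair B B L M) {lam μ : K} (hne : lam ≠ μ)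
    {x y : E} (hx : x ∈ genEigen L lam) (hy : y ∈ genEigen M μ) : B x y = 0 := by
  obtain ⟨m, hm⟩ := mem_genEigen.mp hx
  obtain ⟨n, hn⟩ := mem_genEigen.mp hy
  exact h.apply_eq_zero_of_pow_apply_eq_zero hne m n x y hm hn

lemma apply_eq_zero_of_neg_of_mem_genEigen (h : IsAdjointPair B B L ⇑(-L)) {μ : K}
    (hμ : μ ≠ -μ) {x y : E} (hx : x ∈ genEigen L μ) (hy : y ∈ genEigen L μ) : B x y = 0 :=
  h.apply_eq_zero_of_mem_genEigen hμ hx (genEigen_neg L μ ▸ hy)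

lemma apply_eq_zero_of_mem_iInf_range (h : IsAdjointPair B B L M) {μ : K} {x y : E}
    (hx : x ∈ genEigen L μ) (hy : y ∈ ⨅ n : ℕ, LinearMap.range ((M - μ • 1) ^ n)) :
    B x y = 0 := by
  obtain ⟨n, hn⟩ := mem_genEigen.mp hx
  obtain ⟨u, rfl⟩ := (Submodule.mem_iInf _).mp hy n
  rw [← (h.sub_smul_one μ).pow n, hn, map_zero, LinearMap.zero_apply]

end LinearMap.IsAdjointPair

section Nondegenerate

variable [FiniteDimensional K E] {B : LinearMap.BilinForm K E} {L : Module.End K E}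

lemma eq_zero_of_forall_genEigen_of_forall_iInf_range (hB : B.Nondegenerate) {μ : K} {v : E}
    (h₁ : ∀ y ∈ genEigen L μ, B v y = 0)
    (h₂ : ∀ y ∈ ⨅ n : ℕ, LinearMap.range ((L - μ • 1) ^ n), B v y = 0) : v = 0 := by
  refine hB.1 v fun y => ?_
  obtain ⟨a, ha, b, hb, rfl⟩ := Submodule.mem_sup.mp
    ((isCompl_genEigen_iInf_range L μ).sup_eq_top ▸ Submodule.mem_top (x := y))
  rw [map_add, h₁ a ha, h₂ b hb, add_zero]

lemma genEigen_inf_orthogonal_eq_bot_of_isAdjointPair_self (hB : B.Nondegenerate)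
    (hBrefl : B.IsRefl) (h : IsAdjointPair B B L L) (μ : K) :
    genEigen L μ ⊓ B.orthogonal (genEigen L μ) = ⊥ := by
  refine (Submodule.eq_bot_iff _).mpr fun x ⟨hx, hxo⟩ => ?_
  exact eq_zero_of_forall_genEigen_of_forall_iInf_range hB (fun y hy => hBrefl _ _ (hxo y hy))
    fun y hy => h.apply_eq_zero_of_mem_iInf_range hx hy

lemma eq_zero_of_mem_genEigen_neg_of_isAdjointPair_neg (hanti : IsAdjointPair B B L ⇑(-L))
    (hB : B.Nondegenerate) {μ : K} {q : E}
    (hq : q ∈ genEigen L (-μ)) (h : ∀ y ∈ genEigen L μ, B q y = 0) : q = 0 := by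
  have hanti' : IsAdjointPair B B ⇑(-L) L := fun x y => by
    rw [LinearMap.neg_apply, map_neg, LinearMap.neg_apply, hanti x y]
    simp
  refine eq_zero_of_forall_genEigen_of_forall_iInf_range hB h fun y hy => ?_
  exact hanti'.apply_eq_zero_of_mem_iInf_range (by rw [← neg_neg μ, genEigen_neg]; exact hq) hy

lemma sup_genEigen_neg_inf_orthogonal_eq_bot (hanti : IsAdjointPair B B L ⇑(-L))
    (hB : B.Nondegenerate) (hBrefl : B.IsRefl) {μ : K} (hμ : μ ≠ -μ) :
    (genEigen L μ ⊔ genEigen L (-μ)) ⊓ B.orthogonal (genEigen L μ ⊔ genEigen L (-μ)) = ⊥ := by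
  refine (Submodule.eq_bot_iff _).mpr fun x ⟨hx, hxo⟩ => ?_
  obtain ⟨p, hp, q, hq, rfl⟩ := Submodule.mem_sup.mp hx
  have hxo' : ∀ y ∈ genEigen L μ ⊔ genEigen L (-μ), B (p + q) y = 0 :=
    fun y hy => hBrefl _ _ (hxo y hy)
  have hμ' : -μ ≠ -(-μ) := by rwa [neg_neg, ne_comm]
  -- `E_μ` is isotropic, so `q` is orthogonal to `E_μ` because `p + q` is; likewise for `p`.
  have hq0 : q = 0 := by
    refine eq_zero_of_mem_genEigen_neg_of_isAdjointPair_neg hanti hB hq fun y hy => ?_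
    have := hxo' y (Submodule.mem_sup_left hy)
    rwa [map_add, LinearMap.add_apply,
      hanti.apply_eq_zero_of_neg_of_mem_genEigen hμ hp hy, zero_add] at this
  have hp0 : p = 0 := by
    refine eq_zero_of_mem_genEigen_neg_of_isAdjointPair_neg hanti hB (μ := -μ)
      (by rwa [neg_neg]) fun y hy => ?_
    have := hxo' y (Submodule.mem_sup_right hy)
    rwa [map_add, LinearMap.add_apply,
      hanti.apply_eq_zero_of_neg_of_mem_genEigen hμ' hq hy, add_zero] at this
  rw [hp0, hq0, add_zero]

end Nondegenerate

end Adjoint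

/-- In the reflexive case (`W₁ = V₁^⊥`, `W₂ = V₂^⊥`), with
`L = p_{V₁}^{V₂} − p_{W₂}^{W₁}` and `L' = p_{V₁}^{V₂} − p_{W₁}^{W₂}`:
(i) `L` is anti-self-adjoint, `E_{(L,1)}` and `E_{(L,-1)}` are totally isotropic and
their direct sum is nondegenerate;
(ii) `L'` is self-adjoint, `E_{(L',1)}` and `E_{(L',-1)}` are nondegenerate and
orthogonal to each other. -/
theorem stmt15 {K E : Type*} [Field K] [AddCommGroup E] [Module K E]
    [FiniteDimensional K E] (hchar : (2 : K) ≠ 0)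
    (B : LinearMap.BilinForm K E) (hBnd : B.Nondegenerate) (hBrefl : B.IsRefl)
    (V : Fin 2 → Submodule K E) (hV : IsCompl (V 0) (V 1))
    (W : Fin 2 → Submodule K E) (hWdef : ∀ i, W i = B.orthogonal (V i))
    (hW : IsCompl (W 0) (W 1))
    (L L' : Module.End K E)
    (hL : L = projAlong (V 0) (V 1) hV - projAlong (W 1) (W 0) hW.symm)
    (hL' : L' = projAlong (V 0) (V 1) hV - projAlong (W 0) (W 1) hW) :
    ((∀ x y : E, B (L x) y = - B x (L y)) ∧
      (∀ x ∈ genEigen L 1, ∀ y ∈ genEigen L 1, B x y = 0) ∧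
      (∀ x ∈ genEigen L (-1), ∀ y ∈ genEigen L (-1), B x y = 0) ∧
      Disjoint (genEigen L 1) (genEigen L (-1)) ∧
      (genEigen L 1 ⊔ genEigen L (-1)) ⊓
          B.orthogonal (genEigen L 1 ⊔ genEigen L (-1)) = ⊥) ∧
    ((∀ x y : E, B (L' x) y = B x (L' y)) ∧
      genEigen L' 1 ⊓ B.orthogonal (genEigen L' 1) = ⊥ ∧
      genEigen L' (-1) ⊓ B.orthogonal (genEigen L' (-1)) = ⊥ ∧
      (∀ x ∈ genEigen L' 1, ∀ y ∈ genEigen L' (-1), B x y = 0)) := by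
  have hne : (1 : K) ≠ -1 := fun h => hchar (by linear_combination h)
  have hVW (i : Fin 2) : V i ≤ B.orthogonal (W i) :=
    hWdef i ▸ LinearMap.BilinForm.le_orthogonal_orthogonal hBrefl
  set P := projAlong (V 0) (V 1) hV
  set Q := projAlong (W 1) (W 0) hW.symm
  have hPQ : IsAdjointPair B B P Q :=
    isAdjointPair_projAlong B hV hW.symm (hWdef 1).le (hWdef 0).le
  have hQP : IsAdjointPair B B Q P := isAdjointPair_projAlong B hW.symm hV (hVW 0) (hVW 1)
  have hanti : IsAdjointPair B B L ⇑(-L) := by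
    rw [hL, neg_sub]
    exact hPQ.sub hQP
  have hsym : IsAdjointPair B B L' L' := by
    have h : IsAdjointPair B B ⇑(P + Q - 1) ⇑(Q + P - 1) :=
      (hPQ.add hQP).sub LinearMap.isAdjointPair_one
    rw [hL', eq_sub_of_add_eq (projAlong_add_projAlong hW), sub_sub_eq_add_sub]
    rwa [add_comm Q P] at h
  refine ⟨⟨fun x y => by simpa using hanti x y,
    fun x hx y hy => hanti.apply_eq_zero_of_neg_of_mem_genEigen hne hx hy,
    fun x hx y hy => hanti.apply_eq_zero_of_neg_of_mem_genEigen (by rwa [neg_neg, ne_comm]) hx hy,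
    by simpa only [genEigen_eq_genEigenspace] using Module.End.disjoint_genEigenspace L hne ⊤ ⊤,
    sup_genEigen_neg_inf_orthogonal_eq_bot hanti hBnd hBrefl hne⟩,
    ⟨hsym, genEigen_inf_orthogonal_eq_bot_of_isAdjointPair_self hBnd hBrefl hsym 1,
    genEigen_inf_orthogonal_eq_bot_of_isAdjointPair_self hBnd hBrefl hsym (-1),
    fun x hx y hy => hsym.apply_eq_zero_of_mem_genEigen hne hx hy⟩⟩
end

section
/- Suppose 𝔤 preserves the nondegenerate reflexive bilinear form ⟨·,·⟩, the representation of 𝔤 on E is weakly irreducible, E = V₁ ⊕ V₂ where V₁ and V₂ are 𝔤-invariant subspaces, and both V₁ and V₂ are degenerate (V_i ∩ V_i^⊥ ≠ {0}). Let L = p_{V₁}^{V₂} − p_{V₂^⊥}^{V₁^⊥}. Then E = E_{(L,1)} ⊕ E_{(L,-1)}, V₁ ∩ V₁^⊥ ⊆ E_{(L,1)}, V₂ ∩ V₂^⊥ ⊆ E_{(L,-1)}, the subspaces E_{(L,1)} and E_{(L,-1)} are 𝔤-invariant and totally isotropic, and their sum is nondegenerate. -/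
/-!
The operators `p_{V₁}^{V₂}` and `p_{V₂^⊥}^{V₁^⊥}` are adjoint to each other, so `L` is skew-adjoint;
both commute with `𝔤`, hence so does `L`, and `L = ±1` on `Vᵢ ∩ Vᵢ^⊥`. For a skew-adjoint `L`, the
generalized eigenspaces for `μ` and `ν` are orthogonal unless `μ + ν = 0`, which gives the total
isotropy. The operator `T = (L - 1)(L + 1)` is self-adjoint, so in the Fitting decomposition
`E = ker Tⁿ ⊕ im Tⁿ` the image is orthogonal to the kernel, hence a nondegenerate `𝔤`-invariant
subspace. Weak irreducibility makes it `0` or `E`, and it is not `E` since `Tⁿ` kills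
`V₁ ∩ V₁^⊥ ≠ 0`. So `E = ker Tⁿ = E_{(L,1)} ⊕ E_{(L,-1)}`.
-/


open Submodule

attribute [local instance 100] LieRing.ofAssociativeRing

open Module.End

lemma genEigen_eq_maxGenEigenspace {K E : Type*} [Field K] [AddCommGroup E] [Module K E]
    (L : Module.End K E) (μ : K) : genEigen L μ = L.maxGenEigenspace μ := by
  simp_rw [genEigen, ← iSup_genEigenspace_eq, genEigenspace_nat]

open Polynomial in
lemma ker_pow_mul_le_sup_maxGenEigenspace {K E : Type*} [Field K] [AddCommGroup E] [Module K E]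
    (L : Module.End K E) {μ ν : K} (h : μ ≠ ν) (n : ℕ) :
    LinearMap.ker (((L - μ • 1) * (L - ν • 1)) ^ n) ≤
      L.maxGenEigenspace μ ⊔ L.maxGenEigenspace ν := by
  have hcop : IsCoprime ((X - C μ) ^ n) ((X - C ν) ^ n) :=
    (isCoprime_X_sub_C_of_isUnit_sub (sub_ne_zero.2 h).isUnit).pow
  have heval : ∀ c : K, aeval L ((X - C c) ^ n) = (L - c • 1) ^ n := by
    simp [Algebra.algebraMap_eq_smul_one]
  have hprod : ((L - μ • 1) * (L - ν • 1)) ^ n = aeval L ((X - C μ) ^ n * (X - C ν) ^ n) := by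
    rw [← mul_pow]
    simp [Algebra.algebraMap_eq_smul_one]
  rw [hprod, ← sup_ker_aeval_eq_ker_aeval_mul_of_coprime _ hcop, heval, heval, ← genEigenspace_nat,
    ← genEigenspace_nat]
  exact sup_le_sup (genEigenspace_le_maximal L μ n) (genEigenspace_le_maximal L ν n)

namespace LinearMap

variable {K E : Type*} [Field K] [AddCommGroup E] [Module K E] {B : LinearMap.BilinForm K E}

lemma IsAdjointPair.pow_s16 {f g : Module.End K E} (h : IsAdjointPair B B f g) (n : ℕ) :
    IsAdjointPair B B ⇑(f ^ n) ⇑(g ^ n) := by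
  induction n with
  | zero => exact isAdjointPair_one
  | succ n ih => rw [pow_succ f, pow_succ' g]; exact ih.mul h

lemma isSkewAdjoint_iff_add_eq_zero {f : Module.End K E} :
    B.IsSkewAdjoint f ↔ ∀ x y, B (f x) y + B x (f y) = 0 := by
  refine forall₂_congr fun x y => ?_
  rw [Pi.neg_apply, map_neg, ← sub_eq_zero, sub_neg_eq_add]

lemma IsSkewAdjoint.isSelfAdjoint_sub_smul_mul_sub_neg_smul {L : Module.End K E}
    (hL : B.IsSkewAdjoint L) (μ : K) :
    B.IsSelfAdjoint ⇑((L - μ • 1) * (L - (-μ) • 1)) := by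
  intro x y
  have h2 : B (L (L x)) y = B x (L (L y)) := by
    rw [hL, hL]; simp
  have h1 := hL x y
  simp only [Pi.neg_apply, map_neg] at h1
  simp only [Module.End.mul_apply, LinearMap.sub_apply, LinearMap.smul_apply, Module.End.one_apply,
    map_sub, map_smul, neg_smul, sub_neg_eq_add, map_add, LinearMap.add_apply, smul_eq_mul, h2, h1]
  ring

lemma IsSkewAdjoint.apply_eq_zero_of_pow_apply_eq_zero {L : Module.End K E}
    (hL : B.IsSkewAdjoint L) {μ ν : K} (hμν : μ + ν ≠ 0) :
    ∀ (n m : ℕ) {x y : E}, ((L - μ • 1) ^ n) x = 0 → ((L - ν • 1) ^ m) y = 0 → B x y = 0 := by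
  intro n
  induction n with
  | zero => intro m x y hx _; rw [pow_zero, one_apply] at hx; rw [hx, map_zero, zero_apply]
  | succ n ihn =>
    intro m
    induction m with
    | zero => intro x y _ hy; rw [pow_zero, one_apply] at hy; rw [hy, map_zero]
    | succ m ihm =>
      intro x y hx hy
      rw [pow_succ, mul_apply] at hx hy
      have h₁ : B ((L - μ • 1) x) y = 0 := ihn (m + 1) hx (by rwa [pow_succ, mul_apply])
      have h₂ : B x ((L - ν • 1) y) = 0 := ihm (by rwa [pow_succ, mul_apply]) hy
      have hskew := hL x y
      simp only [Pi.neg_apply, map_neg] at hskew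
      simp only [LinearMap.sub_apply, LinearMap.smul_apply, one_apply, map_sub, map_smul,
        smul_eq_mul] at h₁ h₂
      -- `(μ + ν) B x y = -B ((L - μ) x) y - B x ((L - ν) y)`, and both terms vanish by induction.
      have : (μ + ν) * B x y = 0 := by linear_combination hskew - h₁ - h₂
      exact (mul_eq_zero.1 this).resolve_left hμν

lemma IsSkewAdjoint.apply_eq_zero_of_mem_maxGenEigenspace {L : Module.End K E}
    (hL : B.IsSkewAdjoint L) {μ ν : K} (hμν : μ + ν ≠ 0) {x y : E}
    (hx : x ∈ L.maxGenEigenspace μ) (hy : y ∈ L.maxGenEigenspace ν) : B x y = 0 := by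
  obtain ⟨n, hn⟩ := (mem_maxGenEigenspace L μ x).1 hx
  obtain ⟨m, hm⟩ := (mem_maxGenEigenspace L ν y).1 hy
  exact hL.apply_eq_zero_of_pow_apply_eq_zero hμν n m hn hm

end LinearMap

namespace LinearMap.BilinForm

variable {K E : Type*} [Field K] [AddCommGroup E] [Module K E] {B : LinearMap.BilinForm K E}

lemma isAdjointPair_projection {A₁ A₂ C₁ C₂ : Submodule K E} (hA : IsCompl A₁ A₂)
    (hC : IsCompl C₁ C₂) (h₁ : ∀ a ∈ A₁, ∀ c ∈ C₂, B a c = 0)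
    (h₂ : ∀ a ∈ A₂, ∀ c ∈ C₁, B a c = 0) :
    IsAdjointPair B B (A₁.projection A₂ hA) (C₁.projection C₂ hC) := by
  intro x y
  have hy := h₁ _ (projection_apply_mem hA x) _ (sub_projection_mem hC y)
  have hx := h₂ _ (sub_projection_mem hA x) _ (projection_apply_mem hC y)
  simp only [map_sub, LinearMap.sub_apply] at hx hy
  linear_combination hy - hx

lemma orthogonal_mem_invtSubmodule {a : Module.End K E} (ha : B.IsSkewAdjoint a)
    {S : Submodule K E} (hS : S ∈ invtSubmodule a) : B.orthogonal S ∈ invtSubmodule a := by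
  rw [mem_invtSubmodule] at hS ⊢
  intro y hy
  rw [Submodule.mem_comap, mem_orthogonal_iff]
  intro x hx
  have h := ha x y
  rw [(mem_orthogonal_iff.1 hy) (a x) (hS hx), Pi.neg_apply, map_neg, zero_eq_neg] at h
  exact h

lemma range_inf_orthogonal_range_eq_bot (hB : B.Nondegenerate) {T : Module.End K E}
    (hT : B.IsSelfAdjoint T) (hKR : Codisjoint (ker T) (range T)) :
    range T ⊓ B.orthogonal (range T) = ⊥ := by
  refine eq_bot_iff.2 fun r hr => (Submodule.mem_bot K).2 (hB.2 r fun x => ?_)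
  obtain ⟨⟨y, rfl⟩, hrO⟩ := Submodule.mem_inf.1 hr
  obtain ⟨k, hk, s, hs, rfl⟩ := Submodule.mem_sup.1 (hKR.eq_top ▸ Submodule.mem_top (x := x))
  rw [map_add, LinearMap.add_apply, (mem_orthogonal_iff.1 hrO) s hs, ← hT, mem_ker.1 hk, map_zero,
    LinearMap.zero_apply, add_zero]

theorem sup_maxGenEigenspace_neg_eq_top [FiniteDimensional K E] (hB : B.Nondegenerate)
    {𝔤 : Set (Module.End K E)}
    (hirr : ∀ S : Submodule K E, (∀ a ∈ 𝔤, ∀ x ∈ S, a x ∈ S) →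
      S = ⊥ ∨ S = ⊤ ∨ S ⊓ B.orthogonal S ≠ ⊥)
    {L : Module.End K E} (hL : B.IsSkewAdjoint L) (hcomm : ∀ a ∈ 𝔤, Commute a L)
    {μ : K} (hμ : μ ≠ -μ) (hμL : L.HasEigenvalue μ) :
    L.maxGenEigenspace μ ⊔ L.maxGenEigenspace (-μ) = ⊤ := by
  set T := (L - μ • 1) * (L - (-μ) • 1)
  obtain ⟨n, hKR, hn⟩ : ∃ n, IsCompl (LinearMap.ker (T ^ n)) (LinearMap.range (T ^ n)) ∧ 0 < n :=
    (T.eventually_isCompl_ker_pow_range_pow.and (Filter.eventually_gt_atTop 0)).exists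
  have hinv : ∀ a ∈ 𝔤, ∀ x ∈ range (T ^ n), a x ∈ range (T ^ n) := by
    rintro a ha _ ⟨y, rfl⟩
    have hc : Commute a (T ^ n) :=
      (((hcomm a ha).sub_right ((Commute.one_right a).smul_right μ)).mul_right
        ((hcomm a ha).sub_right ((Commute.one_right a).smul_right (-μ)))).pow_right n
    exact ⟨a y, (LinearMap.congr_fun hc.eq y).symm⟩
  rcases hirr _ hinv with hbot | htop | hdeg
  · refine eq_top_iff.2 fun x _ => ker_pow_mul_le_sup_maxGenEigenspace L hμ n ?_
    rw [LinearMap.range_eq_bot.1 hbot, LinearMap.ker_zero]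
    exact Submodule.mem_top
  · obtain ⟨x, hx⟩ := hμL.exists_hasEigenvector
    refine absurd (eq_bot_of_isCompl_top (htop ▸ hKR)) (Submodule.ne_bot_iff _ |>.2 ⟨x, ?_, hx.2⟩)
    obtain ⟨k, rfl⟩ := Nat.exists_eq_add_of_lt hn
    have hTx : T x = 0 := by simp [T, mem_eigenspace_iff.1 hx.1]
    rw [mem_ker, pow_succ, mul_apply, hTx, map_zero]
  · exact absurd (range_inf_orthogonal_range_eq_bot hB
      ((hL.isSelfAdjoint_sub_smul_mul_sub_neg_smul μ).pow_s16 n) hKR.codisjoint) hdeg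

section projectionDiff

variable (B) {V₁ V₂ : Submodule K E}

noncomputable def projectionDiff (hV : IsCompl V₁ V₂)
    (hW : IsCompl (B.orthogonal V₂) (B.orthogonal V₁)) : Module.End K E :=
  V₁.projection V₂ hV - (B.orthogonal V₂).projection (B.orthogonal V₁) hW

variable {B}
variable (hV : IsCompl V₁ V₂) (hW : IsCompl (B.orthogonal V₂) (B.orthogonal V₁))

lemma isSkewAdjoint_projectionDiff (hB : B.IsRefl) : B.IsSkewAdjoint (B.projectionDiff hV hW) := by
  have hPQ : IsAdjointPair B B (V₁.projection V₂ hV) ((B.orthogonal V₂).projection _ hW) :=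
    isAdjointPair_projection hV hW (fun a ha c hc => mem_orthogonal_iff.1 hc a ha)
      (fun a ha c hc => mem_orthogonal_iff.1 hc a ha)
  have hQP : IsAdjointPair B B ((B.orthogonal V₂).projection _ hW) (V₁.projection V₂ hV) :=
    isAdjointPair_projection hW hV (fun a ha c hc => hB _ _ (mem_orthogonal_iff.1 ha c hc))
      (fun a ha c hc => hB _ _ (mem_orthogonal_iff.1 ha c hc))
  intro x y
  simp only [projectionDiff, LinearMap.sub_apply, Pi.neg_apply, map_sub, map_neg, hPQ x, hQP x]
  abel

lemma commute_projectionDiff {a : Module.End K E} (ha : B.IsSkewAdjoint a)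
    (h₁ : V₁ ∈ invtSubmodule a) (h₂ : V₂ ∈ invtSubmodule a) :
    Commute a (B.projectionDiff hV hW) := by
  have hP : Commute (V₁.projection V₂ hV) a :=
    IsIdempotentElem.commute_iff (isIdempotentElem_projection hV) |>.2
      ⟨by rwa [range_projection], by rwa [ker_projection]⟩
  have hQ : Commute ((B.orthogonal V₂).projection _ hW) a :=
    IsIdempotentElem.commute_iff (isIdempotentElem_projection hW) |>.2
      ⟨by rw [range_projection]; exact orthogonal_mem_invtSubmodule ha h₂,
        by rw [ker_projection]; exact orthogonal_mem_invtSubmodule ha h₁⟩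
  exact hP.symm.sub_right hQ.symm

lemma inf_orthogonal_le_eigenspace_projectionDiff_one :
    V₁ ⊓ B.orthogonal V₁ ≤ (B.projectionDiff hV hW).eigenspace 1 := fun x hx => by
  rw [mem_eigenspace_iff, projectionDiff, LinearMap.sub_apply, projection_apply_of_mem_left hV hx.1,
    projection_apply_of_mem_right hW hx.2, sub_zero, one_smul]

lemma inf_orthogonal_le_eigenspace_projectionDiff_neg_one :
    V₂ ⊓ B.orthogonal V₂ ≤ (B.projectionDiff hV hW).eigenspace (-1) := fun x hx => by
  rw [mem_eigenspace_iff, projectionDiff, LinearMap.sub_apply,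
    projection_apply_of_mem_right hV hx.1, projection_apply_of_mem_left hW hx.2, zero_sub,
    neg_one_smul]

end projectionDiff

end LinearMap.BilinForm

theorem stmt16_general {K E : Type*} [Field K] [AddCommGroup E] [Module K E]
    [FiniteDimensional K E] (hchar : (2 : K) ≠ 0)
    (B : LinearMap.BilinForm K E) (hBnd : B.Nondegenerate) (hBrefl : B.IsRefl)
    (𝔤 : LieSubalgebra K (Module.End K E))
    (hgB : ∀ a ∈ 𝔤, ∀ x y : E, B (a x) y + B x (a y) = 0)
    (hirr : ∀ S : Submodule K E, (∀ a ∈ 𝔤, ∀ x ∈ S, a x ∈ S) →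
      S = ⊥ ∨ S = ⊤ ∨ S ⊓ B.orthogonal S ≠ ⊥)
    (V₁ V₂ : Submodule K E) (hV : IsCompl V₁ V₂)
    (hinv₁ : ∀ a ∈ 𝔤, ∀ x ∈ V₁, a x ∈ V₁) (hinv₂ : ∀ a ∈ 𝔤, ∀ x ∈ V₂, a x ∈ V₂)
    (hdeg₁ : V₁ ⊓ B.orthogonal V₁ ≠ ⊥)
    (hW : IsCompl (B.orthogonal V₁) (B.orthogonal V₂))
    (L : Module.End K E)
    (hL : L = projAlong V₁ V₂ hV -
      projAlong (B.orthogonal V₂) (B.orthogonal V₁) hW.symm) :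
    (Disjoint (genEigen L 1) (genEigen L (-1)) ∧
      genEigen L 1 ⊔ genEigen L (-1) = ⊤) ∧
    V₁ ⊓ B.orthogonal V₁ ≤ genEigen L 1 ∧
    V₂ ⊓ B.orthogonal V₂ ≤ genEigen L (-1) ∧
    (∀ a ∈ 𝔤, ∀ x ∈ genEigen L 1, a x ∈ genEigen L 1) ∧
    (∀ a ∈ 𝔤, ∀ x ∈ genEigen L (-1), a x ∈ genEigen L (-1)) ∧
    (∀ x ∈ genEigen L 1, ∀ y ∈ genEigen L 1, B x y = 0) ∧
    (∀ x ∈ genEigen L (-1), ∀ y ∈ genEigen L (-1), B x y = 0) ∧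
    (genEigen L 1 ⊔ genEigen L (-1)) ⊓
        B.orthogonal (genEigen L 1 ⊔ genEigen L (-1)) = ⊥ := by
  -- `projAlong` unfolds to `Submodule.projection`.
  replace hL : L = B.projectionDiff hV hW.symm := hL
  subst hL
  have hskew : B.IsSkewAdjoint (B.projectionDiff hV hW.symm) :=
    LinearMap.BilinForm.isSkewAdjoint_projectionDiff hV hW.symm hBrefl
  have hcomm : ∀ a ∈ 𝔤, Commute a (B.projectionDiff hV hW.symm) := fun a ha =>
    LinearMap.BilinForm.commute_projectionDiff hV hW.symm
      (LinearMap.isSkewAdjoint_iff_add_eq_zero.2 (hgB a ha)) (hinv₁ a ha) (hinv₂ a ha)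
  have hE₁ := LinearMap.BilinForm.inf_orthogonal_le_eigenspace_projectionDiff_one hV hW.symm
  have hne : (1 : K) ≠ -1 := fun h => hchar (by linear_combination h)
  have htop := LinearMap.BilinForm.sup_maxGenEigenspace_neg_eq_top hBnd (𝔤 := 𝔤) hirr hskew
    hcomm hne (ne_bot_of_le_ne_bot hdeg₁ hE₁)
  simp only [genEigen_eq_maxGenEigenspace]
  refine ⟨⟨disjoint_genEigenspace _ hne ⊤ ⊤, htop⟩,
    hE₁.trans eigenspace_le_maxGenEigenspace,
    (LinearMap.BilinForm.inf_orthogonal_le_eigenspace_projectionDiff_neg_one hV hW.symm).trans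
      eigenspace_le_maxGenEigenspace,
    fun a ha _ hx => mapsTo_maxGenEigenspace_of_comm (hcomm a ha).symm 1 hx,
    fun a ha _ hx => mapsTo_maxGenEigenspace_of_comm (hcomm a ha).symm (-1) hx,
    fun x hx y hy => hskew.apply_eq_zero_of_mem_maxGenEigenspace ?_ hx hy,
    fun x hx y hy => hskew.apply_eq_zero_of_mem_maxGenEigenspace ?_ hx hy, ?_⟩
  · rwa [one_add_one_eq_two]
  · rwa [← neg_add, one_add_one_eq_two, neg_ne_zero]
  · rw [htop, LinearMap.BilinForm.orthogonal_top_eq_bot hBnd, inf_bot_eq]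

/-- If the representation of `𝔤` preserving the nondegenerate reflexive form is weakly
irreducible and `E = V₁ ⊕ V₂` with both `Vᵢ` invariant and degenerate, then with
`L = p_{V₁}^{V₂} − p_{V₂^⊥}^{V₁^⊥}` we have `E = E_{(L,1)} ⊕ E_{(L,-1)}`,
`V₁ ∩ V₁^⊥ ⊆ E_{(L,1)}`, `V₂ ∩ V₂^⊥ ⊆ E_{(L,-1)}`, both generalized eigenspaces are
invariant and totally isotropic, and their sum is nondegenerate. -/
theorem stmt16 {K E : Type*} [Field K] [AddCommGroup E] [Module K E]
    [FiniteDimensional K E] (hchar : (2 : K) ≠ 0)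
    (B : LinearMap.BilinForm K E) (hBnd : B.Nondegenerate) (hBrefl : B.IsRefl)
    (𝔤 : LieSubalgebra K (Module.End K E))
    (hgB : ∀ a ∈ 𝔤, ∀ x y : E, B (a x) y + B x (a y) = 0)
    (hirr : ∀ S : Submodule K E, (∀ a ∈ 𝔤, ∀ x ∈ S, a x ∈ S) →
      S = ⊥ ∨ S = ⊤ ∨ S ⊓ B.orthogonal S ≠ ⊥)
    (V₁ V₂ : Submodule K E) (hV : IsCompl V₁ V₂)
    (hinv₁ : ∀ a ∈ 𝔤, ∀ x ∈ V₁, a x ∈ V₁) (hinv₂ : ∀ a ∈ 𝔤, ∀ x ∈ V₂, a x ∈ V₂)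
    (hdeg₁ : V₁ ⊓ B.orthogonal V₁ ≠ ⊥) (hdeg₂ : V₂ ⊓ B.orthogonal V₂ ≠ ⊥)
    (hW : IsCompl (B.orthogonal V₁) (B.orthogonal V₂))
    (L : Module.End K E)
    (hL : L = projAlong V₁ V₂ hV -
      projAlong (B.orthogonal V₂) (B.orthogonal V₁) hW.symm) :
    (Disjoint (genEigen L 1) (genEigen L (-1)) ∧
      genEigen L 1 ⊔ genEigen L (-1) = ⊤) ∧
    V₁ ⊓ B.orthogonal V₁ ≤ genEigen L 1 ∧
    V₂ ⊓ B.orthogonal V₂ ≤ genEigen L (-1) ∧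
    (∀ a ∈ 𝔤, ∀ x ∈ genEigen L 1, a x ∈ genEigen L 1) ∧
    (∀ a ∈ 𝔤, ∀ x ∈ genEigen L (-1), a x ∈ genEigen L (-1)) ∧
    (∀ x ∈ genEigen L 1, ∀ y ∈ genEigen L 1, B x y = 0) ∧
    (∀ x ∈ genEigen L (-1), ∀ y ∈ genEigen L (-1), B x y = 0) ∧
    (genEigen L 1 ⊔ genEigen L (-1)) ⊓
        B.orthogonal (genEigen L 1 ⊔ genEigen L (-1)) = ⊥ :=
  stmt16_general hchar B hBnd hBrefl 𝔤 hgB hirr V₁ V₂ hV hinv₁ hinv₂ hdeg₁ hW L hL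
end

section
/- Let F₁, …, F_r be subspaces of E forming an internal direct sum E = F₁ ⊕ ⋯ ⊕ F_r, and let R be a formal curvature tensor on E such that R(x,y)(F_l) ⊆ F_l for all x, y ∈ E and all l. Then for all indices i, j, k with k ∉ {i, j} and all x ∈ F_i, y ∈ F_j, z ∈ F_k, one has R(x,y)z = 0. -/
open Submodule

theorem iSupIndep.eq_zero_of_mem_of_mem_sup {R M ι : Type*} [Ring R] [AddCommGroup M]
    [Module R M] {F : ι → Submodule R M} (hind : iSupIndep F) {i j k : ι}
    (hki : k ≠ i) (hkj : k ≠ j) {v : M} (hk : v ∈ F k) (hij : v ∈ F i ⊔ F j) : v = 0 :=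
  disjoint_def.mp (hind k) v hk <|
    sup_le (le_biSup F hki.symm) (le_biSup F hkj.symm) hij

theorem stmt17_general {K E : Type*} [Field K] [AddCommGroup E] [Module K E]
    (r : ℕ) (F : Fin r → Submodule K E)
    (hind : iSupIndep F)
    (R : E →ₗ[K] E →ₗ[K] Module.End K E)
    (hbianchi : ∀ x y z : E, R x y z + R y z x + R z x y = 0)
    (hpres : ∀ (x y : E) (l : Fin r), ∀ z ∈ F l, R x y z ∈ F l) :
    ∀ i j k : Fin r, k ≠ i → k ≠ j →
      ∀ x ∈ F i, ∀ y ∈ F j, ∀ z ∈ F k, R x y z = 0 := by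
  intro i j k hki hkj x hx y hy z hz
  have hcyclic : R x y z = -(R y z x + R z x y) :=
    eq_neg_of_add_eq_zero_left (by rw [← add_assoc]; exact hbianchi x y z)
  refine hind.eq_zero_of_mem_of_mem_sup hki hkj (hpres x y k z hz) ?_
  rw [hcyclic]
  exact neg_mem (add_mem_sup (hpres y z i x hx) (hpres z x j y hy))

/-- If `E = F₁ ⊕ ⋯ ⊕ F_r` and `R` is a formal curvature tensor (antisymmetric, first
Bianchi identity) whose operators preserve each `F_l`, then `R(x,y)z = 0` whenever
`x ∈ F_i`, `y ∈ F_j`, `z ∈ F_k` with `k ∉ {i,j}`. -/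
theorem stmt17 {K E : Type*} [Field K] [AddCommGroup E] [Module K E]
    [FiniteDimensional K E] (hchar : (2 : K) ≠ 0)
    (r : ℕ) (F : Fin r → Submodule K E)
    (hind : iSupIndep F) (hsup : (⨆ l, F l) = ⊤)
    (R : E →ₗ[K] E →ₗ[K] Module.End K E)
    (hanti : ∀ x y : E, R x y = - R y x)
    (hbianchi : ∀ x y z : E, R x y z + R y z x + R z x y = 0)
    (hpres : ∀ (x y : E) (l : Fin r), ∀ z ∈ F l, R x y z ∈ F l) :
    ∀ i j k : Fin r, k ≠ i → k ≠ j →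
      ∀ x ∈ F i, ∀ y ∈ F j, ∀ z ∈ F k, R x y z = 0 :=
  stmt17_general r F hind R hbianchi hpres
end

section
/- Let E be a finite-dimensional real vector space with a nondegenerate symmetric bilinear form ⟨·,·⟩, let V₁, V₂ be subspaces with E = V₁ ⊕ V₂, set W₁ = V₁^⊥ and W₂ = V₂^⊥, and let θ = p_{W₁}^{W₂} ∘ p_{V₁}^{V₂} − p_{V₁}^{V₂} ∘ p_{W₁}^{W₂}. Let 𝔤 be a Lie subalgebra of End(E) such that every a ∈ 𝔤 preserves V₁ and V₂ and is skew-adjoint with respect to ⟨·,·⟩ (⟨a x, y⟩ + ⟨x, a y⟩ = 0 for all x, y), and suppose there exist finitely many formal curvature tensors R₁, …, R_m with R_i(x,y) ∈ 𝔤 for all i and all x, y ∈ E, such that 𝔤 is generated as a Lie algebra by the set {R_i(x,y) : 1 ≤ i ≤ m, x, y ∈ E} (𝔤 is a Berger algebra). Then for every a ∈ 𝔤 the image of a is contained in ker θ, and a vanishes on the image of θ (a ∘ θ = 0). -/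
open Submodule

attribute [local instance 100] LieRing.ofAssociativeRing

/-!
Let `P = p_{V₁}^{V₂}` and `Q = p_{W₁}^{W₂}`. The `B`-adjoint of `P` is `1 - Q`, so `θ = QP - PQ` is
self-adjoint; every `a ∈ 𝔤` preserves `V₁, V₂`, hence by skew-adjointness also `W₁, W₂`, so it
commutes with `P`, `Q` and `θ`. For a formal curvature tensor `R` with values in `𝔤`, these two
facts force `R(x, y) ∘ θ = R(θ x, y)`. The left side exchanges `V₁` and `V₂` (as `θ` does), the
right side preserves them, so both vanish; then also `θ ∘ R(x, y) = 0`. Endomorphisms killed by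
`θ` on both sides form a Lie subalgebra, which therefore contains the Lie algebra generated by
the curvature values, i.e. `𝔤`.
-/

open LinearMap (IsAdjointPair BilinForm)

section Projection

variable {K E : Type*} [Field K] [AddCommGroup E] [Module K E] {A C : Submodule K E}

theorem projAlong_eq_projection (h : IsCompl A C) : projAlong A C h = A.projection C h := rfl

theorem commute_projAlong (h : IsCompl A C) {a : Module.End K E} (hA : ∀ x ∈ A, a x ∈ A)
    (hC : ∀ x ∈ C, a x ∈ C) : Commute (projAlong A C h) a := by
  rw [projAlong_eq_projection,
    LinearMap.IsIdempotentElem.commute_iff (isIdempotentElem_projection h), range_projection,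
    ker_projection]
  exact ⟨(Module.End.mem_invtSubmodule a).2 hA, (Module.End.mem_invtSubmodule a).2 hC⟩

theorem comp_projAlong_sub_apply_mem_right (h : IsCompl A C) (f : Module.End K E) {x : E}
    (hx : x ∈ A) : (f ∘ₗ projAlong A C h - projAlong A C h ∘ₗ f) x ∈ C := by
  simpa [projAlong_eq_projection, projection_apply_of_mem_left h hx] using
    sub_projection_mem h (f x)

theorem comp_projAlong_sub_apply_mem_left (h : IsCompl A C) (f : Module.End K E) {x : E}
    (hx : x ∈ C) : (f ∘ₗ projAlong A C h - projAlong A C h ∘ₗ f) x ∈ A := by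
  simp [projAlong_eq_projection, projection_apply_of_mem_right h hx]

end Projection

theorem eq_zero_of_mapsTo_of_isCompl {R M : Type*} [Ring R] [AddCommGroup M] [Module R M]
    {A C : Submodule R M} (h : IsCompl A C) {g : Module.End R M} (hA : ∀ x ∈ A, g x ∈ A)
    (hC : ∀ x ∈ C, g x ∈ C) (hAC : ∀ x ∈ A, g x ∈ C) (hCA : ∀ x ∈ C, g x ∈ A) : g = 0 := by
  have hdisj := Submodule.disjoint_def.1 h.disjoint
  refine LinearMap.ker_eq_top.1 (eq_top_iff.2 ?_)
  rw [← h.sup_eq_top]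
  exact sup_le (fun x hx ↦ hdisj _ (hA x hx) (hAC x hx)) fun x hx ↦ hdisj _ (hCA x hx) (hC x hx)

section BilinForm

variable {K E : Type*} [Field K] [AddCommGroup E] [Module K E] {B : BilinForm K E}

theorem isAdjointPair_comm_of_isSymm (hB : B.IsSymm) {f g : E → E}
    (h : IsAdjointPair B B f g) : IsAdjointPair B B g f := fun x y ↦
  (hB.eq (g x) y).trans ((h y x).symm.trans (hB.eq (f y) x))

theorem mem_orthogonal_of_isSkewAdjoint {a : Module.End K E} (ha : B.IsSkewAdjoint a)
    {V : Submodule K E} (hV : ∀ x ∈ V, a x ∈ V) {w : E} (hw : w ∈ B.orthogonal V) :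
    a w ∈ B.orthogonal V := by
  refine BilinForm.mem_orthogonal_iff.2 fun v hv ↦ ?_
  have := ha v w
  simp only [Pi.neg_apply, map_neg, BilinForm.mem_orthogonal_iff.1 hw _ (hV v hv)] at this
  exact neg_eq_zero.1 this.symm

variable {V₁ V₂ : Submodule K E} (hV : IsCompl V₁ V₂)
  (hW : IsCompl (B.orthogonal V₁) (B.orthogonal V₂))

theorem isAdjointPair_projAlong_s19 :
    IsAdjointPair B B (projAlong V₁ V₂ hV)
      (1 - projAlong (B.orthogonal V₁) (B.orthogonal V₂) hW : Module.End K E) := by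
  intro x y
  have h₁ : B (projAlong V₁ V₂ hV x) (projAlong _ _ hW y) = 0 :=
    BilinForm.mem_orthogonal_iff.1 (projection_apply_mem hW y) _ (projection_apply_mem hV x)
  have h₂ : B (x - projAlong V₁ V₂ hV x) (y - projAlong _ _ hW y) = 0 :=
    BilinForm.mem_orthogonal_iff.1 (sub_projection_mem hW y) _ (sub_projection_mem hV x)
  simp only [map_sub, LinearMap.sub_apply] at h₂
  simp only [LinearMap.sub_apply, Module.End.one_apply, map_sub]
  linear_combination h₁ - h₂

theorem isSelfAdjoint_projAlong_commutator (hB : B.IsSymm) :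
    B.IsSelfAdjoint (projAlong (B.orthogonal V₁) (B.orthogonal V₂) hW ∘ₗ projAlong V₁ V₂ hV -
      projAlong V₁ V₂ hV ∘ₗ projAlong (B.orthogonal V₁) (B.orthogonal V₂) hW) := by
  set P := projAlong V₁ V₂ hV
  set Q := projAlong (B.orthogonal V₁) (B.orthogonal V₂) hW
  have hP : IsAdjointPair B B P (1 - Q : Module.End K E) := isAdjointPair_projAlong_s19 hV hW
  have hQ : IsAdjointPair B B Q (1 - P : Module.End K E) := by
    have := LinearMap.isAdjointPair_one.sub (isAdjointPair_comm_of_isSymm hB hP)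
    intro x y
    simpa using this x y
  have hadj : (1 - Q) * (1 - P) - (1 - P) * (1 - Q) = Q * P - P * Q := by noncomm_ring
  intro x y
  have := (hQ.mul hP).sub (hP.mul hQ) x y
  simp only [Pi.sub_apply, ← LinearMap.sub_apply, hadj] at this
  simpa using this

end BilinForm

structure IsFormalCurvatureTensor {K E : Type*} [CommRing K] [AddCommGroup E] [Module K E]
    (R : E →ₗ[K] E →ₗ[K] Module.End K E) : Prop where
  antisymm : ∀ x y, R x y = -R y x
  bianchi : ∀ x y z, R x y z + R y z x + R z x y = 0

namespace IsFormalCurvatureTensor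

variable {K E : Type*} [Field K] [AddCommGroup E] [Module K E] {B : BilinForm K E}
  {R : E →ₗ[K] E →ₗ[K] Module.End K E}

theorem form_antisymm_left (hR : IsFormalCurvatureTensor R) (x y z w : E) :
    B (R x y z) w = -B (R y x z) w := by
  rw [hR.antisymm x y]; simp

theorem form_bianchi (hR : IsFormalCurvatureTensor R) (x y z w : E) :
    B (R x y z) w + B (R y z x) w + B (R z x y) w = 0 := by
  simpa using congr(B $(hR.bianchi x y z) w)

theorem form_antisymm_right (hB : B.IsSymm) (hskew : ∀ x y, B.IsSkewAdjoint (R x y)) (x y z w : E) :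
    B (R x y z) w = -B (R x y w) z := by
  rw [hskew x y z w, hB.eq z]; simp

theorem form_pair_symm [NeZero (2 : K)] (hR : IsFormalCurvatureTensor R) (hB : B.IsSymm)
    (hskew : ∀ x y, B.IsSkewAdjoint (R x y)) (x y z w : E) :
    B (R x y z) w = B (R z w x) y := by
  have hA := hR.form_antisymm_left (B := B)
  have hK := form_antisymm_right hB hskew
  refine mul_left_cancel₀ (two_ne_zero (α := K)) ?_
  -- Milnor's octahedron: sum the Bianchi identities on four of its faces.
  linear_combination hR.form_bianchi (B := B) z x y w - hR.form_bianchi (B := B) x y w z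
    - hR.form_bianchi (B := B) y w z x + hR.form_bianchi (B := B) w z x y
    + hK x y z w + hK y w x z + hA w x y z - hK x w y z + hK w z x y - 2 * hA w z x y
    + hA z y w x - hK y z w x - hK z x y w

theorem comp_eq_apply_map [NeZero (2 : K)] (hR : IsFormalCurvatureTensor R) (hB : B.IsSymm)
    (hskew : ∀ x y, B.IsSkewAdjoint (R x y)) (hsep : B.SeparatingLeft) {T : Module.End K E}
    (hT : B.IsSelfAdjoint T) (hcomm : ∀ x y, Commute T (R x y)) (x y : E) :
    R x y ∘ₗ T = R (T x) y := by
  have hpair := hR.form_pair_symm hB hskew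
  have hK := form_antisymm_right hB hskew
  have hmove (x y z w : E) : B (R x y (T z)) w = B (R x y z) (T w) := by
    rw [← Module.End.mul_apply, ← (hcomm x y).eq]; exact hT _ _
  have hshift (x y z w : E) : B (R (T x) y z) w = B (R x (T y) z) w := by
    rw [hpair, hmove, ← hpair]
  obtain ⟨Φ, hΦ⟩ : ∃ Φ : E → E → E → E → K,
      ∀ x y z w, Φ x y z w = B (R (T x) y z) w - B (R x y (T z)) w := ⟨_, fun _ _ _ _ ↦ rfl⟩
  have hcyc (x y z w : E) :
      Φ x y z w = B (R (T x) y z) w + B (R (T y) z x) w + B (R (T z) x y) w := by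
    linear_combination hΦ x y z w - hshift y z x w - hR.form_bianchi (B := B) y (T z) x w
  have hskewΦ (x y z w : E) : Φ x y z w = -Φ x y w z := by
    linear_combination hΦ x y z w + hΦ x y w z + hK (T x) y z w - hmove x y z w
      - hK x y z (T w)
  have hpairΦ (x y z w : E) : Φ z w x y = -Φ x y z w := by
    rw [hΦ, hΦ, hpair (T z), hpair z]; ring
  -- `Φ` is alternating in its first three and in its last two arguments, hence invariant under
  -- the even permutation `(x z)(y w)`, which by pair symmetry changes its sign.
  have hzero (z w : E) : Φ x y z w = 0 := by
    refine mul_left_cancel₀ (two_ne_zero (α := K)) ?_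
    linear_combination hskewΦ x y z w - hcyc x y w z + hcyc w x y z - hskewΦ w x y z
      + hcyc w x z y - hcyc z w x y + hpairΦ x y z w
  ext z
  refine sub_eq_zero.1 (hsep _ fun w ↦ ?_)
  rw [LinearMap.comp_apply, map_sub, LinearMap.sub_apply, ← neg_eq_zero, neg_sub, ← hΦ, hzero]

end IsFormalCurvatureTensor

def twoSidedAnnihilator {R A : Type*} [CommRing R] [Ring A] [Algebra R A] (t : A) :
    LieSubalgebra R A where
  carrier := {a | t * a = 0 ∧ a * t = 0}
  add_mem' := by
    rintro a b ⟨ha₁, ha₂⟩ ⟨hb₁, hb₂⟩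
    exact ⟨by rw [mul_add, ha₁, hb₁, add_zero], by rw [add_mul, ha₂, hb₂, add_zero]⟩
  zero_mem' := ⟨mul_zero t, zero_mul t⟩
  smul_mem' := by
    rintro c a ⟨ha₁, ha₂⟩
    exact ⟨by rw [mul_smul_comm, ha₁, smul_zero], by rw [smul_mul_assoc, ha₂, smul_zero]⟩
  lie_mem' := by
    rintro a b ⟨ha₁, ha₂⟩ ⟨hb₁, hb₂⟩
    refine ⟨?_, ?_⟩
    · rw [Ring.lie_def, mul_sub, ← mul_assoc, ← mul_assoc, ha₁, hb₁, zero_mul, zero_mul, sub_zero]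
    · rw [Ring.lie_def, sub_mul, mul_assoc, mul_assoc, ha₂, hb₂, mul_zero, mul_zero, sub_zero]

theorem stmt19_general {E : Type*} [AddCommGroup E] [Module ℝ E]
    (B : LinearMap.BilinForm ℝ E) (hBnd : B.Nondegenerate) (hBsymm : B.IsSymm)
    (V₁ V₂ : Submodule ℝ E) (hV : IsCompl V₁ V₂)
    (hW : IsCompl (B.orthogonal V₁) (B.orthogonal V₂))
    (θ : Module.End ℝ E)
    (hθ : θ = projAlong (B.orthogonal V₁) (B.orthogonal V₂) hW ∘ₗ projAlong V₁ V₂ hV -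
      projAlong V₁ V₂ hV ∘ₗ projAlong (B.orthogonal V₁) (B.orthogonal V₂) hW)
    (𝔤 : LieSubalgebra ℝ (Module.End ℝ E))
    (hinv₁ : ∀ a ∈ 𝔤, ∀ x ∈ V₁, a x ∈ V₁) (hinv₂ : ∀ a ∈ 𝔤, ∀ x ∈ V₂, a x ∈ V₂)
    (hgB : ∀ a ∈ 𝔤, ∀ x y : E, B (a x) y + B x (a y) = 0)
    (m : ℕ) (R : Fin m → E →ₗ[ℝ] E →ₗ[ℝ] Module.End ℝ E)
    (hanti : ∀ (i : Fin m) (x y : E), R i x y = - R i y x)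
    (hbianchi : ∀ (i : Fin m) (x y z : E), R i x y z + R i y z x + R i z x y = 0)
    (hmatch : ∀ (i : Fin m) (x y : E), R i x y ∈ 𝔤)
    (hgen : 𝔤 = LieSubalgebra.lieSpan ℝ (Module.End ℝ E)
      {a | ∃ (i : Fin m) (x y : E), R i x y = a}) :
    ∀ a ∈ 𝔤, LinearMap.range a ≤ LinearMap.ker θ ∧ a ∘ₗ θ = 0 := by
  have hskew : ∀ a ∈ 𝔤, B.IsSkewAdjoint a := fun a ha x y ↦ by
    simpa [eq_neg_iff_add_eq_zero] using hgB a ha x y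
  have hcomm : ∀ a ∈ 𝔤, Commute θ a := fun a ha ↦ by
    have hP := commute_projAlong hV (hinv₁ a ha) (hinv₂ a ha)
    have hQ := commute_projAlong hW
      (fun _ ↦ mem_orthogonal_of_isSkewAdjoint (hskew a ha) (hinv₁ a ha))
      (fun _ ↦ mem_orthogonal_of_isSkewAdjoint (hskew a ha) (hinv₂ a ha))
    rw [hθ, ← Module.End.mul_eq_comp, ← Module.End.mul_eq_comp]
    exact (hQ.mul_left hP).sub_left (hP.mul_left hQ)
  have hθ_self : B.IsSelfAdjoint θ := hθ ▸ isSelfAdjoint_projAlong_commutator hV hW hBsymm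
  have hRθ (i : Fin m) (x y : E) : R i x y ∘ₗ θ = 0 := by
    have hRi : IsFormalCurvatureTensor (R i) := ⟨hanti i, hbianchi i⟩
    have hcomp := hRi.comp_eq_apply_map hBsymm (fun x y ↦ hskew _ (hmatch i x y)) hBnd.1 hθ_self
      (fun x y ↦ hcomm _ (hmatch i x y)) x y
    refine eq_zero_of_mapsTo_of_isCompl hV (fun v hv ↦ ?_) (fun v hv ↦ ?_) (fun v hv ↦ ?_)
      (fun v hv ↦ ?_)
    · rw [hcomp]; exact hinv₁ _ (hmatch i _ y) v hv
    · rw [hcomp]; exact hinv₂ _ (hmatch i _ y) v hv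
    · exact hinv₂ _ (hmatch i x y) _ (hθ ▸ comp_projAlong_sub_apply_mem_right hV _ hv)
    · exact hinv₁ _ (hmatch i x y) _ (hθ ▸ comp_projAlong_sub_apply_mem_left hV _ hv)
  have h𝔤 : 𝔤 ≤ twoSidedAnnihilator θ := by
    rw [hgen, LieSubalgebra.lieSpan_le]
    rintro _ ⟨i, x, y, rfl⟩
    exact ⟨(hcomm _ (hmatch i x y)).eq.trans (hRθ i x y), hRθ i x y⟩
  intro a ha
  exact ⟨LinearMap.range_le_ker_iff.2 (h𝔤 ha).1, (h𝔤 ha).2⟩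

/-- If `𝔤` is a Berger algebra (generated as a Lie algebra by the values of finitely
many formal curvature tensors matching `𝔤`), preserves the two complementary spaces
`V₁, V₂` and a nondegenerate symmetric bilinear form, then with
`θ = p_{W₁}^{W₂} ∘ p_{V₁}^{V₂} − p_{V₁}^{V₂} ∘ p_{W₁}^{W₂}` (where `Wᵢ = Vᵢ^⊥`),
every `a ∈ 𝔤` satisfies `im a ⊆ ker θ` and `a ∘ θ = 0`. -/
theorem stmt19 {E : Type*} [AddCommGroup E] [Module ℝ E] [FiniteDimensional ℝ E]
    (B : LinearMap.BilinForm ℝ E) (hBnd : B.Nondegenerate) (hBsymm : B.IsSymm)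
    (V₁ V₂ : Submodule ℝ E) (hV : IsCompl V₁ V₂)
    (hW : IsCompl (B.orthogonal V₁) (B.orthogonal V₂))
    (θ : Module.End ℝ E)
    (hθ : θ = projAlong (B.orthogonal V₁) (B.orthogonal V₂) hW ∘ₗ projAlong V₁ V₂ hV -
      projAlong V₁ V₂ hV ∘ₗ projAlong (B.orthogonal V₁) (B.orthogonal V₂) hW)
    (𝔤 : LieSubalgebra ℝ (Module.End ℝ E))
    (hinv₁ : ∀ a ∈ 𝔤, ∀ x ∈ V₁, a x ∈ V₁) (hinv₂ : ∀ a ∈ 𝔤, ∀ x ∈ V₂, a x ∈ V₂)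
    (hgB : ∀ a ∈ 𝔤, ∀ x y : E, B (a x) y + B x (a y) = 0)
    (m : ℕ) (R : Fin m → E →ₗ[ℝ] E →ₗ[ℝ] Module.End ℝ E)
    (hanti : ∀ (i : Fin m) (x y : E), R i x y = - R i y x)
    (hbianchi : ∀ (i : Fin m) (x y z : E), R i x y z + R i y z x + R i z x y = 0)
    (hmatch : ∀ (i : Fin m) (x y : E), R i x y ∈ 𝔤)
    (hgen : 𝔤 = LieSubalgebra.lieSpan ℝ (Module.End ℝ E)
      {a | ∃ (i : Fin m) (x y : E), R i x y = a}) :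
    ∀ a ∈ 𝔤, LinearMap.range a ≤ LinearMap.ker θ ∧ a ∘ₗ θ = 0 :=
  stmt19_general B hBnd hBsymm V₁ V₂ hV hW θ hθ 𝔤 hinv₁ hinv₂ hgB m R hanti hbianchi hmatch hgen
end
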